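/- arXiv:math/0601064 — 3 statements merged into one kernel-verified Lean document; each statement's English description precedes it below -/
import Mathlib

section
/- Let λ be the real root of x³ − 3x² + 1 with λ > 1 (explicitly λ = sin(4π/9)/sin(π/9)). Then the triple of intervals (K_L, K_M, K_S) = ([−λ, 0], [λ−λ², −λ], [1−2λ², λ−2λ²]) is the unique triple of nonempty compact subsets of ℝ satisfying the system: K_L = λ⁻¹K_L ∪ λ⁻¹K_M ∪ (λ⁻¹K_L + 1 − λ); K_M = (λ⁻¹K_L − λ) ∪ (λ⁻¹K_M − λ) ∪ λ⁻¹K_S; K_S = (λ⁻¹K_L + λ − 2λ²) ∪ (λ⁻¹K_M + λ − 2λ²). Here αK + β denotes {αx + β : x ∈ K}. -/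
/-- The system (17) of the paper for a triple `(K_L, K_M, K_S)` of nonempty compact
subsets of `ℝ`:
`K_L = λ⁻¹K_L ∪ λ⁻¹K_M ∪ (λ⁻¹K_L + 1 − λ)`,
`K_M = (λ⁻¹K_L − λ) ∪ (λ⁻¹K_M − λ) ∪ λ⁻¹K_S`,
`K_S = (λ⁻¹K_L + λ − 2λ²) ∪ (λ⁻¹K_M + λ − 2λ²)`. -/
def SystemN4 (lam : ℝ) (K : Set ℝ × Set ℝ × Set ℝ) : Prop :=
  (IsCompact K.1 ∧ K.1.Nonempty) ∧
  (IsCompact K.2.1 ∧ K.2.1.Nonempty) ∧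
  (IsCompact K.2.2 ∧ K.2.2.Nonempty) ∧
  K.1 = (fun x => lam⁻¹ * x) '' K.1 ∪ (fun x => lam⁻¹ * x) '' K.2.1 ∪
        (fun x => lam⁻¹ * x + (1 - lam)) '' K.1 ∧
  K.2.1 = (fun x => lam⁻¹ * x + (-lam)) '' K.1 ∪ (fun x => lam⁻¹ * x + (-lam)) '' K.2.1 ∪
        (fun x => lam⁻¹ * x) '' K.2.2 ∧
  K.2.2 = (fun x => lam⁻¹ * x + (lam - 2 * lam ^ 2)) '' K.1 ∪
        (fun x => lam⁻¹ * x + (lam - 2 * lam ^ 2)) '' K.2.1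

/-!
The maps `x ↦ λ⁻¹ x + β` are `λ⁻¹`-Lipschitz, so passing to the right-hand side of the system
multiplies the largest of the three componentwise Hausdorff distances between two solutions by at
most `λ⁻¹ < 1`. Nonempty compact sets are at finite Hausdorff distance, so two solutions are at
distance `0`, and closed sets at Hausdorff distance `0` coincide. That the intervals solve the
system is a computation of abutting intervals; the root equation `λ³ = 3λ² − 1` enters only
through the endpoint `λ⁻¹ (1 − 2λ²) = λ − λ²`.
-/

open Set Metric
open scoped ENNReal NNReal

section HausdorffLipschitz

variable {α β : Type*} [PseudoEMetricSpace α] [PseudoEMetricSpace β] {f : α → β} {K : ℝ≥0}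

theorem LipschitzWith.infEDist_image_le (hf : LipschitzWith K f) (hK : K ≠ 0) (x : α)
    (t : Set α) : infEDist (f x) (f '' t) ≤ K * infEDist x t := by
  have hK₀ : (K : ℝ≥0∞) ≠ 0 := by exact_mod_cast hK
  rw [infEDist, infEDist, iInf_image, ENNReal.mul_iInf_of_ne hK₀ ENNReal.coe_ne_top]
  refine iInf_mono fun y => ?_
  rw [ENNReal.mul_iInf_of_ne hK₀ ENNReal.coe_ne_top]
  exact iInf_mono fun _ => hf.edist_le_mul x y

theorem LipschitzWith.hausdorffEDist_image_le (hf : LipschitzWith K f) (hK : K ≠ 0)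
    (s t : Set α) : hausdorffEDist (f '' s) (f '' t) ≤ K * hausdorffEDist s t := by
  refine hausdorffEDist_le_of_infEDist ?_ ?_ <;> rintro _ ⟨x, hx, rfl⟩
  · exact (hf.infEDist_image_le hK x t).trans
      (by gcongr; exact infEDist_le_hausdorffEDist_of_mem hx)
  · rw [hausdorffEDist_comm]
    exact (hf.infEDist_image_le hK x s).trans
      (by gcongr; exact infEDist_le_hausdorffEDist_of_mem hx)

end HausdorffLipschitz

theorem ENNReal.eq_zero_of_le_mul_of_lt_one {a c : ℝ≥0∞} (ha : a ≠ ⊤) (hc : c < 1)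
    (h : a ≤ c * a) : a = 0 := by
  by_contra ha0
  exact h.not_gt (by simpa using ENNReal.mul_lt_mul_left ha0 ha hc)

theorem Real.lipschitzWith_mul_add (a b : ℝ) : LipschitzWith ‖a‖₊ (fun x => a * x + b) :=
  LipschitzWith.of_dist_le_mul fun x y => by simp [Real.dist_eq, ← mul_sub, abs_mul]

theorem Set.Icc_eq_union_Icc_union_Icc {α : Type*} [LinearOrder α] {a b c d : α} (hab : a ≤ b)
    (hbc : b ≤ c) (hcd : c ≤ d) : Icc a d = Icc c d ∪ Icc b c ∪ Icc a b := by
  rw [union_comm (Icc c d), Icc_union_Icc_eq_Icc hbc hcd, union_comm,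
    Icc_union_Icc_eq_Icc hab (hbc.trans hcd)]

noncomputable def tripleHausdorffEDist {α : Type*} [PseudoEMetricSpace α]
    (K K' : Set α × Set α × Set α) : ℝ≥0∞ :=
  max (hausdorffEDist K.1 K'.1) (max (hausdorffEDist K.2.1 K'.2.1) (hausdorffEDist K.2.2 K'.2.2))

-- The tiles `L`, `M`, `S` of the substitution `S ↦ ML`, `M ↦ SML`, `L ↦ LML`.
def tiles (lam : ℝ) : Set ℝ × Set ℝ × Set ℝ :=
  (Icc (-lam) 0, Icc (lam - lam ^ 2) (-lam), Icc (1 - 2 * lam ^ 2) (lam - 2 * lam ^ 2))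

namespace SystemN4

variable {lam : ℝ} {K K' : Set ℝ × Set ℝ × Set ℝ}

theorem tripleHausdorffEDist_ne_top (hK : SystemN4 lam K) (hK' : SystemN4 lam K') :
    tripleHausdorffEDist K K' ≠ ⊤ := by
  have lt_top {s t : Set ℝ} (hs : IsCompact s ∧ s.Nonempty) (ht : IsCompact t ∧ t.Nonempty) :
      hausdorffEDist s t < ⊤ :=
    (hausdorffEDist_ne_top_of_nonempty_of_bounded hs.2 ht.2 hs.1.isBounded ht.1.isBounded).lt_top
  obtain ⟨hL, hM, hS, -⟩ := hK
  obtain ⟨hL', hM', hS', -⟩ := hK'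
  exact (max_lt (lt_top hL hL') (max_lt (lt_top hM hM') (lt_top hS hS'))).ne

theorem tripleHausdorffEDist_le (hK : SystemN4 lam K) (hK' : SystemN4 lam K')
    (hlam : lam ≠ 0) : tripleHausdorffEDist K K' ≤ ‖lam⁻¹‖₊ * tripleHausdorffEDist K K' := by
  obtain ⟨L, M, S⟩ := K
  obtain ⟨L', M', S'⟩ := K'
  obtain ⟨-, -, -, hL, hM, hS⟩ := hK
  obtain ⟨-, -, -, hL', hM', hS'⟩ := hK'
  set E := tripleHausdorffEDist (L, M, S) (L', M', S')
  have hEL : hausdorffEDist L L' ≤ E := le_max_left _ _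
  have hEM : hausdorffEDist M M' ≤ E := (le_max_left _ _).trans (le_max_right _ _)
  have hES : hausdorffEDist S S' ≤ E := (le_max_right _ _).trans (le_max_right _ _)
  have hc : ‖lam⁻¹‖₊ ≠ 0 := by simpa using hlam
  have image_le {f : ℝ → ℝ} (hf : LipschitzWith ‖lam⁻¹‖₊ f) {s t : Set ℝ}
      (h : hausdorffEDist s t ≤ E) : hausdorffEDist (f '' s) (f '' t) ≤ ‖lam⁻¹‖₊ * E :=
    (hf.hausdorffEDist_image_le hc s t).trans (by gcongr)
  have union_le {s₁ s₂ t₁ t₂ : Set ℝ} (h₁ : hausdorffEDist s₁ t₁ ≤ ‖lam⁻¹‖₊ * E)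
      (h₂ : hausdorffEDist s₂ t₂ ≤ ‖lam⁻¹‖₊ * E) :
      hausdorffEDist (s₁ ∪ s₂) (t₁ ∪ t₂) ≤ ‖lam⁻¹‖₊ * E :=
    hausdorffEDist_union_le.trans (max_le h₁ h₂)
  have scale : LipschitzWith ‖lam⁻¹‖₊ (fun x : ℝ => lam⁻¹ * x) := lipschitzWith_smul lam⁻¹
  have affine (b : ℝ) := Real.lipschitzWith_mul_add lam⁻¹ b
  refine max_le ?_ (max_le ?_ ?_)
  · rw [hL, hL']
    exact union_le (union_le (image_le scale hEL) (image_le scale hEM)) (image_le (affine _) hEL)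
  · rw [hM, hM']
    exact union_le (union_le (image_le (affine _) hEL) (image_le (affine _) hEM))
      (image_le scale hES)
  · rw [hS, hS']
    exact union_le (image_le (affine _) hEL) (image_le (affine _) hEM)

theorem eq_of_one_lt (hK : SystemN4 lam K) (hK' : SystemN4 lam K') (hlam : 1 < lam) :
    K = K' := by
  have hc : (‖lam⁻¹‖₊ : ℝ≥0∞) < 1 := by
    rw [ENNReal.coe_lt_one_iff, ← NNReal.coe_lt_coe, coe_nnnorm, Real.norm_eq_abs,
      abs_inv, abs_of_pos (by linarith), NNReal.coe_one]
    exact inv_lt_one_of_one_lt₀ hlam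
  have h0 := ENNReal.eq_zero_of_le_mul_of_lt_one (hK.tripleHausdorffEDist_ne_top hK') hc
    (hK.tripleHausdorffEDist_le hK' (by linarith))
  simp only [tripleHausdorffEDist, max_eq_zero] at h0
  obtain ⟨⟨hL, -⟩, ⟨hM, -⟩, ⟨hS, -⟩, -⟩ := hK
  obtain ⟨⟨hL', -⟩, ⟨hM', -⟩, ⟨hS', -⟩, -⟩ := hK'
  exact Prod.ext ((hL.isClosed.hausdorffEDist_zero_iff hL'.isClosed).1 h0.1)
    (Prod.ext ((hM.isClosed.hausdorffEDist_zero_iff hM'.isClosed).1 h0.2.1)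
      ((hS.isClosed.hausdorffEDist_zero_iff hS'.isClosed).1 h0.2.2))

end SystemN4

theorem systemN4_tiles {lam : ℝ} (hroot : lam ^ 3 - 3 * lam ^ 2 + 1 = 0) (hlam : 1 < lam) :
    SystemN4 lam (tiles lam) := by
  have h0 : 0 < lam⁻¹ := by positivity
  have two_lt : 2 < lam := by nlinarith
  have e1 : lam⁻¹ * -lam = -1 := by field_simp
  have e2 : lam⁻¹ * (lam - lam ^ 2) = 1 - lam := by field_simp
  have e3 : lam⁻¹ * (1 - 2 * lam ^ 2) = lam - lam ^ 2 := by field_simp; linear_combination hroot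
  have e4 : lam⁻¹ * (lam - 2 * lam ^ 2) = 1 - 2 * lam := by field_simp
  have hMS : lam - lam ^ 2 ≤ 1 - 2 * lam := by nlinarith
  refine ⟨⟨isCompact_Icc, nonempty_Icc.2 (by linarith)⟩,
    ⟨isCompact_Icc, nonempty_Icc.2 (by nlinarith)⟩,
    ⟨isCompact_Icc, nonempty_Icc.2 (by nlinarith)⟩, ?_, ?_, ?_⟩ <;>
    simp only [tiles, image_mul_left_Icc' h0, image_affine_Icc' h0, e1, e2, e3, e4, mul_zero,
      zero_add]
  · rw [show -1 + (1 - lam) = -lam by ring]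
    exact Icc_eq_union_Icc_union_Icc (by linarith) (by linarith) (by linarith)
  · rw [show -1 + -lam = -1 - lam by ring, show 1 - lam + -lam = 1 - 2 * lam by ring]
    exact Icc_eq_union_Icc_union_Icc hMS (by linarith) (by linarith)
  · rw [union_comm, show 1 - lam + (lam - 2 * lam ^ 2) = 1 - 2 * lam ^ 2 by ring]
    exact (Icc_union_Icc_eq_Icc (by linarith) (by linarith)).symm

theorem intervals_unique_solution_general (lam : ℝ)
    (hroot : lam ^ 3 - 3 * lam ^ 2 + 1 = 0) (hlam : 1 < lam) :
    SystemN4 lam (Set.Icc (-lam) 0, Set.Icc (lam - lam ^ 2) (-lam),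
      Set.Icc (1 - 2 * lam ^ 2) (lam - 2 * lam ^ 2)) ∧
    ∀ K : Set ℝ × Set ℝ × Set ℝ, SystemN4 lam K →
      K = (Set.Icc (-lam) 0, Set.Icc (lam - lam ^ 2) (-lam),
        Set.Icc (1 - 2 * lam ^ 2) (lam - 2 * lam ^ 2)) :=
  ⟨systemN4_tiles hroot hlam, fun _ hK => hK.eq_of_one_lt (systemN4_tiles hroot hlam) hlam⟩

/-- For `λ` the real root of `x³ − 3x² + 1` with `λ > 1` (explicitly
`λ = sin(4π/9)/sin(π/9)`), the triple of intervals
`([−λ,0], [λ−λ²,−λ], [1−2λ², λ−2λ²])` is the unique triple of nonempty compact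
subsets of `ℝ` satisfying the system above. -/
theorem intervals_unique_solution (lam : ℝ)
    (hroot : lam ^ 3 - 3 * lam ^ 2 + 1 = 0) (hlam : 1 < lam)
    (hexp : lam = Real.sin (4 * Real.pi / 9) / Real.sin (Real.pi / 9)) :
    SystemN4 lam (Set.Icc (-lam) 0, Set.Icc (lam - lam ^ 2) (-lam),
      Set.Icc (1 - 2 * lam ^ 2) (lam - 2 * lam ^ 2)) ∧
    ∀ K : Set ℝ × Set ℝ × Set ℝ, SystemN4 lam K →
      K = (Set.Icc (-lam) 0, Set.Icc (lam - lam ^ 2) (-lam),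
        Set.Icc (1 - 2 * lam ^ 2) (lam - 2 * lam ^ 2)) :=
  intervals_unique_solution_general lam hroot hlam
end

section
/- Let s_k = sin(kπ/9) for k = 1,2,3,4 and let A' be the 3×3 matrix with rows (0,1,1), (1,1,1), (0,1,2). Then the row vector v = ( (s₁/s₄)·(s₂/s₄ + s₁/s₂), s₂/s₄ + s₁/s₂, 1 + s₄s₁/s₂² ) satisfies v·A' = (s₄/s₁)·v; that is, v is a left eigenvector of A' with eigenvalue λ = s₄/s₁. -/
/-!
Put `r = 2 cos (π / 9)`. The double-angle formula gives `s₂ = r s₁` and `s₄ = (r² - 2) s₂`,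
while the triple-angle formula at `cos (π / 3) = 1 / 2` says `r³ = 3 r + 1`. Hence
`s₄ = (r³ - 2 r) s₁ = (r + 1) s₁`, so the eigenvalue is `1 + 2 cos (π / 9)`, and after clearing
denominators each coordinate of `v A' - λ v` is a multiple of `r³ - 3 r - 1`.
-/

open Real

lemma two_cos_pi_div_nine_cube :
    (2 * cos (π / 9)) ^ 3 = 3 * (2 * cos (π / 9)) + 1 := by
  have h := cos_three_mul (π / 9)
  rw [show 3 * (π / 9) = π / 3 by ring, cos_pi_div_three] at h
  linear_combination -2 * h

lemma sin_four_mul (x : ℝ) : sin (4 * x) = ((2 * cos x) ^ 2 - 2) * sin (2 * x) := by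
  rw [show 4 * x = 2 * (2 * x) by ring, sin_two_mul (2 * x), cos_two_mul]
  ring

lemma dual_matrix_left_eigenvector_of_cube {s₁ s₂ s₄ r : ℝ} (hs₁ : s₁ ≠ 0)
    (h₂ : s₂ = r * s₁) (h₄ : s₄ = (r + 1) * s₁) (hr : r ^ 3 = 3 * r + 1) :
    Matrix.vecMul ![(s₁ / s₄) * (s₂ / s₄ + s₁ / s₂), s₂ / s₄ + s₁ / s₂, 1 + s₄ * s₁ / s₂ ^ 2]
        !![(0 : ℝ), 1, 1; 1, 1, 1; 0, 1, 2] =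
      (s₄ / s₁) • ![(s₁ / s₄) * (s₂ / s₄ + s₁ / s₂), s₂ / s₄ + s₁ / s₂,
        1 + s₄ * s₁ / s₂ ^ 2] := by
  have hr₀ : r ≠ 0 := by
    rintro rfl
    norm_num at hr
  have hr₁ : r + 1 ≠ 0 := by
    intro h
    obtain rfl : r = -1 := by linear_combination h
    norm_num at hr
  subst h₂ h₄
  ext i
  fin_cases i <;> simp [Matrix.vecMul, dotProduct, Fin.sum_univ_three] <;> field_simp
  · linear_combination -(r ^ 2 + r + 1) * hr
  · linear_combination -(r ^ 2 + r + 1) * hr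

/-- With `s_k = sin(kπ/9)` and `A'` the 3×3 matrix with rows `(0,1,1), (1,1,1),
(0,1,2)`, the row vector
`v = ((s₁/s₄)(s₂/s₄ + s₁/s₂), s₂/s₄ + s₁/s₂, 1 + s₄s₁/s₂²)` (the areas of the
polygonal prototiles) satisfies `v·A' = (s₄/s₁)·v`, i.e. `v` is a left
eigenvector of `A'` with eigenvalue `λ = s₄/s₁`. -/
theorem dual_matrix_left_eigenvector (s : ℕ → ℝ)
    (hs : ∀ k, s k = Real.sin ((k : ℝ) * π / 9)) :
    Matrix.vecMul
        ![(s 1 / s 4) * (s 2 / s 4 + s 1 / s 2), s 2 / s 4 + s 1 / s 2,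
          1 + s 4 * s 1 / (s 2) ^ 2]
        !![(0 : ℝ), 1, 1; 1, 1, 1; 0, 1, 2] =
      (s 4 / s 1) •
        ![(s 1 / s 4) * (s 2 / s 4 + s 1 / s 2), s 2 / s 4 + s 1 / s 2,
          1 + s 4 * s 1 / (s 2) ^ 2] := by
  have hk (k : ℕ) : s k = sin (k * (π / 9)) := by rw [hs]; ring_nf
  set r := 2 * cos (π / 9)
  have hr : r ^ 3 = 3 * r + 1 := two_cos_pi_div_nine_cube
  have h₁ : s 1 ≠ 0 := by
    rw [hk, Nat.cast_one, one_mul]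
    exact (sin_pos_of_pos_of_lt_pi (by positivity) (by linarith [pi_pos])).ne'
  have h₂ : s 2 = r * s 1 := by
    rw [hk, hk]
    push_cast
    rw [sin_two_mul, one_mul]
    ring
  have h₄ : s 4 = (r + 1) * s 1 := by
    have h₄₂ : s 4 = (r ^ 2 - 2) * s 2 := by
      rw [hk, hk]
      push_cast
      exact sin_four_mul _
    rw [h₄₂, h₂]
    linear_combination s 1 * hr
  exact dual_matrix_left_eigenvector_of_cube h₁ h₂ h₄ hr
end

section
/- Let s_k = sin(kπ/9) for k = 1,2,3,4, let λ = s₄/s₁, λ₂ = −s₁/s₂, λ₃ = s₂/s₄, and let W' = [1−2λ², λ−2λ²] ∪ [λ−λ², 0] ⊂ ℝ. Define U := { (a + bλ₂ + cλ₂², a + bλ₃ + cλ₃²) ∈ ℝ² : a, b, c ∈ ℤ, a + bλ + cλ² ∈ W' }. Then U is a Delone set: there exists r > 0 such that every open ball of radius r in ℝ² contains at most one point of U, and there exists R > 0 such that every closed ball of radius R in ℝ² contains at least one point of U. -/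
/-!
The roots `λ, λ₂, λ₃` of `x³ - 3x² + 1` embed `ℤ[λ]` as a lattice in `ℝ³`, and `U` is its
cut-and-project set.

Uniform discreteness: the product of the three conjugates of `a + bλ + cλ²` is an integer, its
norm, which vanishes only at `0` because the cubic is irreducible over `ℚ`. If two points of `U`
are at distance `< ε`, their difference has two conjugates smaller than `ε` and the third bounded
by the diameter of the window, so its norm is smaller than `1` in absolute value and the points
coincide.

Relative denseness: the roots are distinct, so every target in the plane is
`w + β(λᵢ - λ) + γ(λᵢ² - λ²)` for real `β, γ`. Rounding `β, γ` and then choosing `a` so that the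
internal coordinate lands in a unit interval `[w, w + 1]` inside the window moves the point by a
bounded amount.

With `t = cos(π/9)` one has `λ = 1 + 2t`, `λ₂ = -1/(2t)`, `λ₃ = 2t/(1 + 2t)`, and Vieta's formulas
for these follow from the triple-angle identity `8t³ - 6t - 1 = 0`.
-/

open Metric Polynomial Real Set

theorem Int.pow_three_sub_three_mul_sq_add_one_ne_zero (n : ℤ) : n ^ 3 - 3 * n ^ 2 + 1 ≠ 0 := by
  intro h
  have heven : Even (n * (n - 3)) := by
    rw [show n * (n - 3) = (n - 3) * (n - 3 + 1) + 2 * (n - 3) by ring]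
    exact (Int.even_mul_succ_self _).add (even_two_mul _)
  have hneg_one : Even (-1 : ℤ) := by
    rw [show (-1 : ℤ) = n * (n * (n - 3)) by linear_combination -h]
    exact heven.mul_left n
  have := Int.even_iff.mp hneg_one
  omega

theorem irreducible_X_pow_three_sub_three_mul_X_sq_add_one :
    Irreducible (X ^ 3 - 3 * X ^ 2 + 1 : ℚ[X]) := by
  have hmonic : (X ^ 3 - 3 * X ^ 2 + 1 : ℚ[X]).Monic := by monicity!
  have hdeg : (X ^ 3 - 3 * X ^ 2 + 1 : ℚ[X]).natDegree = 3 := by compute_degree!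
  rw [hmonic.irreducible_iff_roots_eq_zero_of_degree_le_three (by omega) (by omega),
    Multiset.eq_zero_iff_forall_notMem]
  intro q hq
  rw [mem_roots hmonic.ne_zero, IsRoot.def] at hq
  replace hq : q ^ 3 - 3 * q ^ 2 + 1 = 0 := by simpa using hq
  obtain ⟨n, rfl, -⟩ := exists_integer_of_is_root_of_monic
    (by monicity! : (X ^ 3 - 3 * X ^ 2 + 1 : ℤ[X]).Monic) (r := q)
    (by simpa only [map_add, map_sub, map_mul, map_pow, aeval_X, map_one, map_ofNat] using hq)
  apply Int.pow_three_sub_three_mul_sq_add_one_ne_zero n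
  exact_mod_cast (by simpa using hq : ((n ^ 3 - 3 * n ^ 2 + 1 : ℤ) : ℚ) = 0)

theorem minpoly_eq_of_pow_three_sub_three_mul_sq_add_one_eq_zero {μ : ℝ}
    (hμ : μ ^ 3 - 3 * μ ^ 2 + 1 = 0) : minpoly ℚ μ = X ^ 3 - 3 * X ^ 2 + 1 := by
  refine (minpoly.eq_of_irreducible_of_monic
    irreducible_X_pow_three_sub_three_mul_X_sq_add_one ?_ (by monicity!)).symm
  simpa only [map_add, map_sub, map_mul, map_pow, aeval_X, map_one, map_ofNat] using hμ

def embed (μ : ℝ) (a b c : ℤ) : ℝ := a + b * μ + c * μ ^ 2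

theorem embed_sub (μ : ℝ) (a b c a' b' c' : ℤ) :
    embed μ (a - a') (b - b') (c - c') = embed μ a b c - embed μ a' b' c' := by
  simp only [embed]; push_cast; ring

theorem eq_zero_of_embed_eq_zero {μ : ℝ} (hμ : μ ^ 3 - 3 * μ ^ 2 + 1 = 0) {a b c : ℤ}
    (h : embed μ a b c = 0) : a = 0 ∧ b = 0 ∧ c = 0 := by
  have hdeg : (C (a : ℚ) + C (b : ℚ) * X + C (c : ℚ) * X ^ 2).degree < (minpoly ℚ μ).degree := by
    have h₂ : (C (a : ℚ) + C (b : ℚ) * X + C (c : ℚ) * X ^ 2).degree ≤ 2 := by compute_degree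
    have h₃ : (X ^ 3 - 3 * X ^ 2 + 1 : ℚ[X]).degree = 3 := by compute_degree!
    rw [minpoly_eq_of_pow_three_sub_three_mul_sq_add_one_eq_zero hμ, h₃]
    exact h₂.trans_lt (by norm_num)
  have hzero := eq_zero_of_dvd_of_degree_lt (minpoly.dvd ℚ μ (by simpa [embed] using h)) hdeg
  have hcoeff := fun n => congrArg (coeff · n) hzero
  simp only [coeff_add, coeff_C, coeff_C_mul, coeff_X_pow, coeff_X, coeff_zero] at hcoeff
  exact ⟨by simpa using hcoeff 0, by simpa using hcoeff 1, by simpa using hcoeff 2⟩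

/-- `μ₁, μ₂, μ₃` are the three roots of `x³ - 3x² + 1`, encoded by Vieta's formulas. -/
structure IsCubicRootTriple (μ₁ μ₂ μ₃ : ℝ) : Prop where
  sum_eq : μ₁ + μ₂ + μ₃ = 3
  pairwise_sum_eq : μ₁ * μ₂ + μ₁ * μ₃ + μ₂ * μ₃ = 0
  prod_eq : μ₁ * μ₂ * μ₃ = -1

/-- The norm form of `ℤ[λ]`: the product of the three conjugates of `a + bλ + cλ²`. -/
def cubicNorm (a b c : ℤ) : ℤ :=
  a ^ 3 + 3 * a ^ 2 * b + 9 * a ^ 2 * c + 3 * a * b * c + 6 * a * c ^ 2 - b ^ 3 - 3 * b ^ 2 * c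
    + c ^ 3

namespace IsCubicRootTriple

variable {μ₁ μ₂ μ₃ : ℝ} (h : IsCubicRootTriple μ₁ μ₂ μ₃)
include h

theorem cubic_eq (x : ℝ) : x ^ 3 - 3 * x ^ 2 + 1 = (x - μ₁) * (x - μ₂) * (x - μ₃) := by
  rw [show (x - μ₁) * (x - μ₂) * (x - μ₃) = x ^ 3 - (μ₁ + μ₂ + μ₃) * x ^ 2
    + (μ₁ * μ₂ + μ₁ * μ₃ + μ₂ * μ₃) * x - μ₁ * μ₂ * μ₃ by ring,
    h.sum_eq, h.pairwise_sum_eq, h.prod_eq]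
  ring

/-- The discriminant of `x³ - 3x² + 1` is `81`. -/
theorem vandermonde_ne_zero : (μ₂ - μ₁) * (μ₃ - μ₁) * (μ₃ - μ₂) ≠ 0 := by
  have hdisc : ∀ e₁ e₂ e₃ : ℝ, μ₁ + μ₂ + μ₃ = e₁ → μ₁ * μ₂ + μ₁ * μ₃ + μ₂ * μ₃ = e₂ →
      μ₁ * μ₂ * μ₃ = e₃ → ((μ₂ - μ₁) * (μ₃ - μ₁) * (μ₃ - μ₂)) ^ 2
        = e₁ ^ 2 * e₂ ^ 2 - 4 * e₂ ^ 3 - 4 * e₁ ^ 3 * e₃ + 18 * e₁ * e₂ * e₃ - 27 * e₃ ^ 2 := by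
    rintro _ _ _ rfl rfl rfl; ring
  intro hzero
  have := hdisc _ _ _ h.sum_eq h.pairwise_sum_eq h.prod_eq
  rw [hzero] at this
  norm_num at this

theorem embed_mul_embed_mul_embed (a b c : ℤ) :
    embed μ₁ a b c * embed μ₂ a b c * embed μ₃ a b c = cubicNorm a b c := by
  have hnorm : ∀ e₁ e₂ e₃ : ℝ, μ₁ + μ₂ + μ₃ = e₁ → μ₁ * μ₂ + μ₁ * μ₃ + μ₂ * μ₃ = e₂ →
      μ₁ * μ₂ * μ₃ = e₃ → embed μ₁ a b c * embed μ₂ a b c * embed μ₃ a b c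
        = a ^ 3 + a ^ 2 * b * e₁ + a ^ 2 * c * (e₁ ^ 2 - 2 * e₂) + a * b ^ 2 * e₂
          + a * b * c * (e₁ * e₂ - 3 * e₃) + a * c ^ 2 * (e₂ ^ 2 - 2 * e₁ * e₃) + b ^ 3 * e₃
          + b ^ 2 * c * e₁ * e₃ + b * c ^ 2 * e₂ * e₃ + c ^ 3 * e₃ ^ 2 := by
    rintro _ _ _ rfl rfl rfl; simp only [embed]; ring
  rw [hnorm _ _ _ h.sum_eq h.pairwise_sum_eq h.prod_eq, cubicNorm]
  push_cast
  ring

theorem eq_zero_of_abs_embed_mul_lt_one {a b c : ℤ}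
    (hlt : |embed μ₁ a b c * embed μ₂ a b c * embed μ₃ a b c| < 1) :
    a = 0 ∧ b = 0 ∧ c = 0 := by
  rw [h.embed_mul_embed_mul_embed] at hlt
  have hnorm : cubicNorm a b c = 0 := by
    rw [← Int.abs_lt_one_iff]; exact_mod_cast hlt
  have hprod := h.embed_mul_embed_mul_embed a b c
  rw [hnorm, Int.cast_zero, mul_eq_zero, mul_eq_zero] at hprod
  rcases hprod with (h₁ | h₂) | h₃
  · exact eq_zero_of_embed_eq_zero (by rw [h.cubic_eq]; ring) h₁
  · exact eq_zero_of_embed_eq_zero (by rw [h.cubic_eq]; ring) h₂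
  · exact eq_zero_of_embed_eq_zero (by rw [h.cubic_eq]; ring) h₃

end IsCubicRootTriple

def modelSet (μ₁ μ₂ μ₃ : ℝ) (W : Set ℝ) : Set (EuclideanSpace ℝ (Fin 2)) :=
  {p | ∃ a b c : ℤ, p 0 = embed μ₂ a b c ∧ p 1 = embed μ₃ a b c ∧ embed μ₁ a b c ∈ W}

theorem EuclideanSpace.abs_sub_le_dist {ι : Type*} [Fintype ι] (p q : EuclideanSpace ℝ ι) (i : ι) :
    |p i - q i| ≤ dist p q := by
  rw [← Real.dist_eq]; exact PiLp.dist_apply_le p q i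

theorem EuclideanSpace.dist_le_abs_add_abs (p q : EuclideanSpace ℝ (Fin 2)) :
    dist p q ≤ |p 0 - q 0| + |p 1 - q 1| := by
  rw [EuclideanSpace.dist_eq, Fin.sum_univ_two, Real.dist_eq, Real.dist_eq,
    Real.sqrt_le_left (by positivity)]
  nlinarith [abs_nonneg (p 0 - q 0), abs_nonneg (p 1 - q 1), sq_abs (p 0 - q 0),
    sq_abs (p 1 - q 1)]

theorem IsCubicRootTriple.modelSet_inter_ball_subsingleton {μ₁ μ₂ μ₃ : ℝ}
    (h : IsCubicRootTriple μ₁ μ₂ μ₃) {W : Set ℝ} (hW : Bornology.IsBounded W) :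
    ∃ r > 0, ∀ x, (modelSet μ₁ μ₂ μ₃ W ∩ ball x r).Subsingleton := by
  obtain ⟨D, hD, hWD⟩ := hW.exists_pos_norm_le
  set ε := (2 * D + 1)⁻¹
  have hε : 0 < ε := by positivity
  have hε₁ : ε ≤ 1 := inv_le_one_of_one_le₀ (by linarith)
  have hDε : 2 * D * ε < 1 := by
    rw [← div_eq_mul_inv, div_lt_one (by positivity)]; linarith
  refine ⟨ε / 2, by positivity, fun x p ⟨⟨a, b, c, hp₀, hp₁, hpW⟩, hpx⟩ q
    ⟨⟨a', b', c', hq₀, hq₁, hqW⟩, hqx⟩ => ?_⟩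
  have hpq : dist p q < ε := by
    linarith [dist_triangle_right p q x, mem_ball.mp hpx, mem_ball.mp hqx]
  have hphys₀ : |embed μ₂ (a - a') (b - b') (c - c')| ≤ ε := by
    rw [embed_sub, ← hp₀, ← hq₀]; exact (EuclideanSpace.abs_sub_le_dist p q 0).trans hpq.le
  have hphys₁ : |embed μ₃ (a - a') (b - b') (c - c')| ≤ 1 := by
    rw [embed_sub, ← hp₁, ← hq₁]
    exact (EuclideanSpace.abs_sub_le_dist p q 1).trans (hpq.le.trans hε₁)
  have hint : |embed μ₁ (a - a') (b - b') (c - c')| ≤ 2 * D := by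
    rw [embed_sub]
    have := hWD _ hpW; have := hWD _ hqW
    simp only [Real.norm_eq_abs] at *
    linarith [abs_sub (embed μ₁ a b c) (embed μ₁ a' b' c')]
  have hprod : |embed μ₁ (a - a') (b - b') (c - c') * embed μ₂ (a - a') (b - b') (c - c')
      * embed μ₃ (a - a') (b - b') (c - c')| < 1 := by
    rw [abs_mul, abs_mul]
    calc _ ≤ 2 * D * ε * 1 := by gcongr
      _ < 1 := by linarith
  obtain ⟨ha, hb, hc⟩ := h.eq_zero_of_abs_embed_mul_lt_one hprod
  obtain ⟨rfl, rfl, rfl⟩ : a = a' ∧ b = b' ∧ c = c' := ⟨by omega, by omega, by omega⟩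
  ext i
  fin_cases i
  · exact hp₀.trans hq₀.symm
  · exact hp₁.trans hq₁.symm

theorem exists_mul_add_mul_eq_and_mul_add_mul_eq {p q r s : ℝ} (hdet : p * s - q * r ≠ 0)
    (u v : ℝ) : ∃ β γ : ℝ, β * p + γ * q = u ∧ β * r + γ * s = v :=
  ⟨(u * s - q * v) / (p * s - q * r), (p * v - u * r) / (p * s - q * r),
    by rw [div_mul_eq_mul_div, div_mul_eq_mul_div, ← add_div, div_eq_iff hdet]; ring,
    by rw [div_mul_eq_mul_div, div_mul_eq_mul_div, ← add_div, div_eq_iff hdet]; ring⟩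

theorem abs_sub_embed_le {μ ν w β γ : ℝ} {a b c : ℤ}
    (hβ : |β - b| ≤ 1 / 2) (hγ : |γ - c| ≤ 1 / 2) (hw : embed μ a b c ∈ Icc w (w + 1)) :
    |w + β * (ν - μ) + γ * (ν ^ 2 - μ ^ 2) - embed ν a b c|
      ≤ |ν - μ| / 2 + |ν ^ 2 - μ ^ 2| / 2 + 1 := by
  have hδ : |embed μ a b c - w| ≤ 1 := abs_le.mpr ⟨by linarith [hw.1], by linarith [hw.2]⟩
  calc _ = |(β - b) * (ν - μ) + (γ - c) * (ν ^ 2 - μ ^ 2) - (embed μ a b c - w)| := by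
        simp only [embed]; ring_nf
    _ ≤ |β - b| * |ν - μ| + |γ - c| * |ν ^ 2 - μ ^ 2| + |embed μ a b c - w| := by
        rw [← abs_mul, ← abs_mul]
        exact (abs_sub _ _).trans (add_le_add_left (abs_add_le _ _) _)
    _ ≤ 1 / 2 * |ν - μ| + 1 / 2 * |ν ^ 2 - μ ^ 2| + 1 := by gcongr
    _ = _ := by ring

theorem modelSet_inter_closedBall_nonempty {μ₁ μ₂ μ₃ : ℝ}
    (hμ : (μ₂ - μ₁) * (μ₃ - μ₁) * (μ₃ - μ₂) ≠ 0) {W : Set ℝ} {w : ℝ}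
    (hW : Icc w (w + 1) ⊆ W) :
    ∃ R > 0, ∀ x, (modelSet μ₁ μ₂ μ₃ W ∩ closedBall x R).Nonempty := by
  refine ⟨(|μ₂ - μ₁| / 2 + |μ₂ ^ 2 - μ₁ ^ 2| / 2 + 1) + (|μ₃ - μ₁| / 2 + |μ₃ ^ 2 - μ₁ ^ 2| / 2 + 1),
    by positivity, fun x => ?_⟩
  obtain ⟨β, γ, hx₀, hx₁⟩ := exists_mul_add_mul_eq_and_mul_add_mul_eq
    (p := μ₂ - μ₁) (q := μ₂ ^ 2 - μ₁ ^ 2) (r := μ₃ - μ₁) (s := μ₃ ^ 2 - μ₁ ^ 2)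
    (by convert hμ using 1; ring) (x 0 - w) (x 1 - w)
  set b := round β
  set c := round γ
  set a := ⌈w - embed μ₁ 0 b c⌉
  have hw : embed μ₁ a b c ∈ Icc w (w + 1) := by
    have h₁ : w - embed μ₁ 0 b c ≤ a := Int.le_ceil _
    have h₂ : (a : ℝ) < w - embed μ₁ 0 b c + 1 := Int.ceil_lt_add_one _
    simp only [embed, Int.cast_zero] at h₁ h₂ ⊢
    constructor <;> linarith
  refine ⟨!₂[embed μ₂ a b c, embed μ₃ a b c], ⟨a, b, c, rfl, rfl, hW hw⟩, ?_⟩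
  rw [mem_closedBall, dist_comm]
  refine (EuclideanSpace.dist_le_abs_add_abs _ _).trans (add_le_add ?_ ?_)
  · rw [show x 0 = w + β * (μ₂ - μ₁) + γ * (μ₂ ^ 2 - μ₁ ^ 2) by linarith]
    exact abs_sub_embed_le (abs_sub_round β) (abs_sub_round γ) hw
  · rw [show x 1 = w + β * (μ₃ - μ₁) + γ * (μ₃ ^ 2 - μ₁ ^ 2) by linarith]
    exact abs_sub_embed_le (abs_sub_round β) (abs_sub_round γ) hw

theorem cos_pi_div_nine_cubic : 8 * cos (π / 9) ^ 3 - 6 * cos (π / 9) - 1 = 0 := by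
  have h := cos_three_mul (π / 9)
  rw [show 3 * (π / 9) = π / 3 by ring, cos_pi_div_three] at h
  linarith

theorem one_half_lt_cos_pi_div_nine : 1 / 2 < cos (π / 9) := by
  rw [← cos_pi_div_three]
  exact cos_lt_cos_of_nonneg_of_le_pi (by positivity) (by linarith [pi_pos]) (by linarith [pi_pos])

theorem sin_two_mul_pi_div_nine : sin (2 * π / 9) = 2 * cos (π / 9) * sin (π / 9) := by
  rw [mul_div_assoc, sin_two_mul]; ring

theorem sin_four_mul_pi_div_nine : sin (4 * π / 9) = (1 + 2 * cos (π / 9)) * sin (π / 9) := by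
  rw [show 4 * π / 9 = 2 * (2 * (π / 9)) by ring, sin_two_mul, sin_two_mul, cos_two_mul]
  linear_combination sin (π / 9) * cos_pi_div_nine_cubic

theorem isCubicRootTriple_of_cubic {t : ℝ} (ht : 8 * t ^ 3 - 6 * t - 1 = 0) (ht₀ : 0 < t) :
    IsCubicRootTriple (1 + 2 * t) (-1 / (2 * t)) (2 * t / (1 + 2 * t)) where
  sum_eq := by field_simp; linear_combination ht
  pairwise_sum_eq := by field_simp; linear_combination ht
  prod_eq := by field_simp

/-- The cut-and-project set `U` of the dual substitution point set `V'` is a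
Delone set in the Euclidean plane: with `s_k = sin(kπ/9)`, `λ = s₄/s₁`,
`λ₂ = −s₁/s₂`, `λ₃ = s₂/s₄`, window `W' = [1−2λ², λ−2λ²] ∪ [λ−λ², 0]` and
`U = {(a+bλ₂+cλ₂², a+bλ₃+cλ₃²) : a,b,c ∈ ℤ, a+bλ+cλ² ∈ W'}`, there is `r > 0`
such that every open ball of radius `r` contains at most one point of `U`, and
there is `R > 0` such that every closed ball of radius `R` contains at least one
point of `U`. -/
theorem dual_model_set_is_delone (s : ℕ → ℝ)
    (hs : ∀ k, s k = Real.sin ((k : ℝ) * π / 9))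
    (lam lam2 lam3 : ℝ)
    (h1 : lam = s 4 / s 1) (h2 : lam2 = -(s 1 / s 2)) (h3 : lam3 = s 2 / s 4)
    (W' : Set ℝ)
    (hW : W' = Set.Icc (1 - 2 * lam ^ 2) (lam - 2 * lam ^ 2) ∪
          Set.Icc (lam - lam ^ 2) 0)
    (U : Set (EuclideanSpace ℝ (Fin 2)))
    (hU : U = {p | ∃ a b c : ℤ,
        p 0 = (a : ℝ) + (b : ℝ) * lam2 + (c : ℝ) * lam2 ^ 2 ∧
        p 1 = (a : ℝ) + (b : ℝ) * lam3 + (c : ℝ) * lam3 ^ 2 ∧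
        ((a : ℝ) + (b : ℝ) * lam + (c : ℝ) * lam ^ 2) ∈ W'}) :
    (∃ r > (0 : ℝ), ∀ x : EuclideanSpace ℝ (Fin 2),
        (U ∩ Metric.ball x r).Subsingleton) ∧
    (∃ R > (0 : ℝ), ∀ x : EuclideanSpace ℝ (Fin 2),
        (U ∩ Metric.closedBall x R).Nonempty) := by
  have hsin : 0 < sin (π / 9) := sin_pos_of_pos_of_lt_pi (by positivity) (by linarith [pi_pos])
  have hcos := one_half_lt_cos_pi_div_nine
  have hs₁ : s 1 = sin (π / 9) := by rw [hs]; norm_num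
  have hs₂ : s 2 = 2 * cos (π / 9) * sin (π / 9) := by rw [hs, ← sin_two_mul_pi_div_nine]; norm_num
  have hs₄ : s 4 = (1 + 2 * cos (π / 9)) * sin (π / 9) := by
    rw [hs, ← sin_four_mul_pi_div_nine]; norm_num
  have hlam : lam = 1 + 2 * cos (π / 9) := by rw [h1, hs₄, hs₁]; field_simp
  have hroots : IsCubicRootTriple lam lam2 lam3 := by
    rw [hlam, h2, h3, hs₁, hs₂, hs₄]
    convert isCubicRootTriple_of_cubic cos_pi_div_nine_cubic (by linarith) using 1 <;> field_simp
  have hwindow : Icc (lam - lam ^ 2) (lam - lam ^ 2 + 1) ⊆ W' :=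
    hW ▸ (Icc_subset_Icc_right (by nlinarith)).trans subset_union_right
  subst hU
  exact ⟨hroots.modelSet_inter_ball_subsingleton
      (hW ▸ (isBounded_Icc _ _).union (isBounded_Icc _ _)),
    modelSet_inter_closedBall_nonempty hroots.vandermonde_ne_zero hwindow⟩
end
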